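/- arXiv:2402.04604 — 10 statements merged into one kernel-verified Lean document; each statement's English description precedes it below -/
import Mathlib

section
/- For b ∈ L and σ ∈ G, an element x ∈ L lies in the radical of φ_{b,σ} if and only if σ⁻¹(b·x) = −b·σ(x). -/
/-!
Moving `σ` across the trace (`Tr(a·σ y) = Tr(σ⁻¹ a · y)`) gives
`φ_{b,σ}(x, y) = Tr((σ⁻¹(b x) + b σ(x)) · y)`, so `x` lies in the radical exactly when
`σ⁻¹(b x) + b σ(x)` is orthogonal to all of `L` for the trace form, which is nondegenerate
because `L/K` is separable.
-/

open Algebra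

theorem Algebra.trace_mul_algEquiv {R S : Type*} [CommRing R] [CommRing S] [Algebra R S]
    (σ : S ≃ₐ[R] S) (a y : S) : trace R S (a * σ y) = trace R S (σ⁻¹ a * y) := by
  rw [← trace_eq_of_algEquiv σ (σ⁻¹ a * y), map_mul σ, AlgEquiv.aut_inv, σ.apply_symm_apply]

theorem Algebra.forall_trace_mul_eq_zero_iff {K L : Type*} [Field K] [Field L] [Algebra K L]
    [FiniteDimensional K L] [Algebra.IsSeparable K L] (z : L) :
    (∀ y : L, trace K L (z * y) = 0) ↔ z = 0 :=
  ⟨(traceForm_nondegenerate K L).1 z, fun hz y => by rw [hz, zero_mul, map_zero]⟩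

theorem Algebra.trace_mul_add_algEquiv {R S : Type*} [CommRing R] [CommRing S] [Algebra R S]
    (b : S) (σ : S ≃ₐ[R] S) (x y : S) :
    trace R S (b * (x * σ y + σ x * y)) = trace R S ((σ⁻¹ (b * x) + b * σ x) * y) := by
  rw [add_mul, map_add, ← trace_mul_algEquiv, mul_add, map_add, ← mul_assoc, ← mul_assoc]

theorem mem_radical_iff_general (K L : Type*) [Field K] [Field L] [Algebra K L]
    [FiniteDimensional K L] [IsGalois K L]
    (b : L) (σ : L ≃ₐ[K] L) (x : L) :
    (∀ y : L, Algebra.trace K L (b * (x * σ y + σ x * y)) = 0) ↔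
      σ⁻¹ (b * x) = -(b * σ x) := by
  simp only [trace_mul_add_algEquiv, forall_trace_mul_eq_zero_iff, add_eq_zero_iff_eq_neg]

/-- For `b ∈ L` and `σ ∈ Gal(L/K)`, an element `x ∈ L` lies in the radical of
`φ_{b,σ}` (i.e. `φ_{b,σ}(x,y) = 0` for all `y`) if and only if `σ⁻¹(b·x) = −b·σ(x)`. -/
theorem mem_radical_iff (K L : Type*) [Field K] [Field L] [Algebra K L]
    [FiniteDimensional K L] [IsGalois K L] (h2 : (2 : K) ≠ 0)
    (b : L) (σ : L ≃ₐ[K] L) (x : L) :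
    (∀ y : L, Algebra.trace K L (b * (x * σ y + σ x * y)) = 0) ↔
      σ⁻¹ (b * x) = -(b * σ x) :=
  mem_radical_iff_general K L b σ x
end

section
/- Let b ∈ L be nonzero and σ ∈ G. Then φ_{b,σ} is degenerate if and only if there exists a nonzero c ∈ L with −σ(b)·b⁻¹ = σ²(c)·c⁻¹; equivalently, if and only if N_{L/F}(−σ(b)/b) = 1 where F is the fixed field of σ². -/
/-!
Moving `σ` across the trace gives `Tr(b x σ(y)) = Tr(σ⁻¹(b x) y)`, so by nondegeneracy of the
trace form `x` lies in the radical of `φ_{b,σ}` iff `b x + σ(b) σ²(x) = 0`, i.e. iff `x⁻¹` is a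
nonzero solution of `σ²(c) = (-σ(b)/b) c`. Since `σ²` generates `Gal(L/F)`, Hilbert 90 for the
cyclic extension `L/F` says that such a `c` exists iff `N_{L/F}(-σ(b)/b) = 1`.
-/

open Finset

section CyclicHilbert90

variable {F L : Type*} [Field F] [Field L] [Algebra F L]

theorem prod_range_succ_pow_apply (τ : L ≃ₐ[F] L) (η : L) (i : ℕ) :
    ∏ j ∈ range (i + 1), (τ ^ j) η = η * τ (∏ j ∈ range i, (τ ^ j) η) := by
  rw [prod_range_succ', map_prod, pow_zero, AlgEquiv.one_apply, mul_comm]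
  simp only [pow_succ', AlgEquiv.mul_apply]

theorem exists_sum_range_orderOf_mul_pow_apply_ne_zero [FiniteDimensional F L]
    (τ : L ≃ₐ[F] L) {a : ℕ → L} (ha : a 0 ≠ 0) :
    ∃ z, ∑ i ∈ range (orderOf τ), a i * (τ ^ i) z ≠ 0 := by
  by_contra! h
  have hli : LinearIndependent L fun i : Fin (orderOf τ) => ⇑(τ ^ (i : ℕ)) :=
    (linearIndependent_monoidHom L L).comp
      (fun i : Fin (orderOf τ) => ((τ ^ (i : ℕ) : L ≃ₐ[F] L) : L →* L))
      fun i j hij => Fin.ext <| pow_injOn_Iio_orderOf i.2 j.2 <| by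
        ext x; exact DFunLike.congr_fun hij x
  have hpos : 0 < orderOf τ := (isOfFinOrder_of_finite τ).orderOf_pos
  refine ha (Fintype.linearIndependent_iff.1 hli (a ·) (funext fun z => ?_) ⟨0, hpos⟩)
  rw [Finset.sum_apply, Pi.zero_apply, ← h z,
    ← Fin.sum_univ_eq_sum_range (fun i => a i * (τ ^ i) z)]
  simp only [Pi.smul_apply, smul_eq_mul]

variable [FiniteDimensional F L] [IsGalois F L]

theorem prod_range_orderOf_pow_apply {τ : L ≃ₐ[F] L} (hτ : ∀ g, g ∈ Subgroup.zpowers τ) (η : L) :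
    ∏ j ∈ range (orderOf τ), (τ ^ j) η = algebraMap F L (Algebra.norm F η) := by
  classical
  rw [Algebra.norm_eq_prod_automorphisms, ← IsCyclic.image_range_orderOf hτ, prod_image]
  exact fun i hi j hj h => pow_injOn_Iio_orderOf (mem_range.1 hi) (mem_range.1 hj) h

/-- Hilbert 90 for a cyclic extension with generator `τ`. Mathlib's
`groupCohomology.exists_div_of_norm_eq_one` only covers fields in `Type`. Take `c = ε⁻¹`,
where `ε = ∑_{i < m} N_i τ^i(z)` with `N_i = η τ(η) ⋯ τ^{i-1}(η)` is nonzero for some `z` by Dedekind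
independence, and `η τ(ε) = ε` because `N_m = N(η) = 1`. -/
theorem exists_ne_zero_apply_eq_mul_of_norm_eq_one {τ : L ≃ₐ[F] L}
    (hτ : ∀ g, g ∈ Subgroup.zpowers τ) {η : L} (hη : Algebra.norm F η = 1) :
    ∃ c ≠ 0, τ c = η * c := by
  set N : ℕ → L := fun i => ∏ j ∈ range i, (τ ^ j) η
  set m := orderOf τ
  have hN0 : N 0 = 1 := prod_range_zero _
  have hNm : N m = 1 := by
    show ∏ j ∈ range (orderOf τ), (τ ^ j) η = 1
    rw [prod_range_orderOf_pow_apply hτ, hη, map_one]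
  obtain ⟨z, hz⟩ := exists_sum_range_orderOf_mul_pow_apply_ne_zero τ (a := N) (hN0 ▸ one_ne_zero)
  set ε := ∑ i ∈ range m, N i * (τ ^ i) z
  have hε : η * τ ε = ε := by
    have hsucc := sum_range_succ (fun i => N i * (τ ^ i) z) m
    have hsucc' := sum_range_succ' (fun i => N i * (τ ^ i) z) m
    calc η * τ ε = ∑ i ∈ range m, N (i + 1) * (τ ^ (i + 1)) z := by
          simp only [ε, map_sum, mul_sum, map_mul, ← mul_assoc, N, prod_range_succ_pow_apply,
            pow_succ' τ, AlgEquiv.mul_apply]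
      _ = ε + (N m * (τ ^ m) z - N 0 * (τ ^ 0) z) := by linear_combination hsucc - hsucc'
      _ = ε := by rw [hNm, hN0, pow_orderOf_eq_one, pow_zero, sub_self, add_zero]
  refine ⟨ε⁻¹, inv_ne_zero hz, ?_⟩
  have hτε : τ ε ≠ 0 := by rwa [map_ne_zero]
  rw [map_inv₀, eq_mul_inv_iff_mul_eq₀ hz, inv_mul_eq_iff_eq_mul₀ hτε, mul_comm, hε]

theorem norm_eq_one_iff_exists_apply_eq_mul {τ : L ≃ₐ[F] L} (hτ : ∀ g, g ∈ Subgroup.zpowers τ)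
    {η : L} : Algebra.norm F η = 1 ↔ ∃ c ≠ 0, τ c = η * c := by
  refine ⟨exists_ne_zero_apply_eq_mul_of_norm_eq_one hτ, ?_⟩
  rintro ⟨c, hc, hτc⟩
  have hNτc := congrArg (Algebra.norm F) hτc
  rw [Algebra.norm_eq_of_algEquiv, map_mul] at hNτc
  exact (mul_eq_right₀ (Algebra.norm_ne_zero_iff.2 hc)).1 hNτc.symm

end CyclicHilbert90

theorem exists_generator_fixedField_zpowers {K L : Type*} [Field K] [Field L] [Algebra K L]
    [FiniteDimensional K L] (g : L ≃ₐ[K] L) :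
    ∃ τ : L ≃ₐ[IntermediateField.fixedField (Subgroup.zpowers g)] L,
      (∀ x, τ x = g x) ∧ ∀ h, h ∈ Subgroup.zpowers τ := by
  set e := IntermediateField.subgroupEquivAlgEquiv (Subgroup.zpowers g)
  refine ⟨e ⟨g, Subgroup.mem_zpowers g⟩, fun _ => rfl, fun h => ?_⟩
  obtain ⟨k, hk⟩ := Subgroup.mem_zpowers_iff.1 (e.symm h).2
  refine Subgroup.mem_zpowers_iff.2 ⟨k, ?_⟩
  rw [← map_zpow, ← e.apply_symm_apply h]
  exact congrArg e (Subtype.ext hk)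

section TraceForm

variable {K L : Type*} [Field K] [Field L] [Algebra K L]

theorem trace_mul_algEquiv_apply (σ : L ≃ₐ[K] L) (a y : L) :
    Algebra.trace K L (a * σ y) = Algebra.trace K L (σ.symm a * y) := by
  rw [← Algebra.trace_eq_of_algEquiv σ.symm, map_mul, σ.symm_apply_apply]

theorem forall_trace_mul_add_eq_zero_iff [FiniteDimensional K L] [Algebra.IsSeparable K L]
    (σ : L ≃ₐ[K] L) (b x : L) :
    (∀ y, Algebra.trace K L (b * (x * σ y + σ x * y)) = 0) ↔ b * x + σ b * σ (σ x) = 0 := by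
  have hsymm : σ.symm (b * x + σ b * σ (σ x)) = σ.symm (b * x) + b * σ x := by
    simp only [map_add, map_mul, AlgEquiv.symm_apply_apply]
  have htrace : ∀ y, Algebra.trace K L (b * (x * σ y + σ x * y)) =
      Algebra.traceForm K L (σ.symm (b * x + σ b * σ (σ x))) y := by
    intro y
    rw [Algebra.traceForm_apply, hsymm, add_mul, map_add, ← trace_mul_algEquiv_apply, ← map_add]
    ring_nf
  simp_rw [htrace]
  refine ⟨fun h => ?_, fun h y => by rw [h, map_zero, map_zero, LinearMap.zero_apply]⟩
  exact (map_eq_zero_iff σ.symm σ.symm.injective).1 ((traceForm_nondegenerate K L).1 _ h)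

end TraceForm

theorem exists_map_eq_inv_mul_iff {M L : Type*} [Field L] [FunLike M L L]
    [MonoidWithZeroHomClass M L L] (f : M) (a : L) :
    (∃ x ≠ 0, f x = a⁻¹ * x) ↔ ∃ x ≠ 0, f x = a * x := by
  have key : ∀ a : L, (∃ x ≠ 0, f x = a⁻¹ * x) → ∃ x ≠ 0, f x = a * x :=
    fun a ⟨x, hx, hfx⟩ => ⟨x⁻¹, inv_ne_zero hx, by rw [map_inv₀, hfx, mul_inv, inv_inv, mul_comm]⟩
  exact ⟨key a, fun h => key a⁻¹ (by rwa [inv_inv])⟩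

theorem degenerate_iff_general (K L : Type*) [Field K] [Field L] [Algebra K L]
    [FiniteDimensional K L] [IsGalois K L]
    (b : L) (hb : b ≠ 0) (σ : L ≃ₐ[K] L) :
    ((∃ x : L, x ≠ 0 ∧ ∀ y : L, Algebra.trace K L (b * (x * σ y + σ x * y)) = 0) ↔
       ∃ c : L, c ≠ 0 ∧ -(σ b) * b⁻¹ = σ (σ c) * c⁻¹) ∧
    ((∃ x : L, x ≠ 0 ∧ ∀ y : L, Algebra.trace K L (b * (x * σ y + σ x * y)) = 0) ↔
       Algebra.norm (↥(IntermediateField.fixedField (Subgroup.zpowers (σ ^ 2))))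
         (-(σ b) / b) = 1) := by
  obtain ⟨τ, hτσ, hτ⟩ := exists_generator_fixedField_zpowers (σ ^ 2)
  have hτ_apply : ∀ x, τ x = σ (σ x) := fun x => by rw [hτσ, pow_two, AlgEquiv.mul_apply]
  have hσb : σ b ≠ 0 := by rwa [map_ne_zero]
  have hdeg : (∃ x : L, x ≠ 0 ∧ ∀ y : L, Algebra.trace K L (b * (x * σ y + σ x * y)) = 0) ↔
      ∃ c ≠ 0, τ c = -(σ b) / b * c := by
    rw [← exists_map_eq_inv_mul_iff]
    refine exists_congr fun x => and_congr_right fun _ => ?_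
    rw [forall_trace_mul_add_eq_zero_iff, hτ_apply, inv_div]
    field_simp
    constructor <;> intro h <;> linear_combination h
  have hratio : (∃ c : L, c ≠ 0 ∧ -(σ b) * b⁻¹ = σ (σ c) * c⁻¹) ↔
      ∃ c ≠ 0, τ c = -(σ b) / b * c := by
    refine exists_congr fun c => and_congr_right fun hc => ?_
    rw [hτ_apply, eq_mul_inv_iff_mul_eq₀ hc, div_eq_mul_inv, eq_comm]
  exact ⟨hdeg.trans hratio.symm, hdeg.trans (norm_eq_one_iff_exists_apply_eq_mul hτ).symm⟩

/-- For `b ∈ L` nonzero and `σ ∈ Gal(L/K)`, the symmetric bilinear form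
`φ_{b,σ}(x,y) = Tr_{L/K}(b·(x·σ(y) + σ(x)·y))` is degenerate if and only if there exists a
nonzero `c ∈ L` with `−σ(b)·b⁻¹ = σ²(c)·c⁻¹`; equivalently, if and only if
`N_{L/F}(−σ(b)/b) = 1` where `F` is the fixed field of `σ²`. -/
theorem degenerate_iff (K L : Type*) [Field K] [Field L] [Algebra K L]
    [FiniteDimensional K L] [IsGalois K L] (h2 : (2 : K) ≠ 0)
    (b : L) (hb : b ≠ 0) (σ : L ≃ₐ[K] L) :
    ((∃ x : L, x ≠ 0 ∧ ∀ y : L, Algebra.trace K L (b * (x * σ y + σ x * y)) = 0) ↔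
       ∃ c : L, c ≠ 0 ∧ -(σ b) * b⁻¹ = σ (σ c) * c⁻¹) ∧
    ((∃ x : L, x ≠ 0 ∧ ∀ y : L, Algebra.trace K L (b * (x * σ y + σ x * y)) = 0) ↔
       Algebra.norm (↥(IntermediateField.fixedField (Subgroup.zpowers (σ ^ 2))))
         (-(σ b) / b) = 1) :=
  degenerate_iff_general K L b hb σ
end

section
/- Let b ∈ L be nonzero and σ ∈ G, and suppose φ_{b,σ} is degenerate, with nonzero c ∈ L satisfying −σ(b)·b⁻¹ = σ²(c)·c⁻¹. Then the radical of φ_{b,σ} equals c⁻¹·F, where F is the fixed field of σ², and hence the radical has K-dimension n/[L:F]; consequently the rank of φ_{b,σ} equals n − n/[L:F]. -/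
/-!
Moving `σ` off `y` with `Tr ∘ σ = Tr` gives `φ_{b,σ}(x, y) = Tr((b·x + σ(b)·σ²(x))·σ(y))`,
so by nondegeneracy of the trace form the radical is `{x | b·x + σ(b)·σ²(x) = 0}`.
Multiplying by `c` and using `σ(b)·c = -σ²(c)·b` turns this equation into
`b·(c·x - σ²(c·x)) = 0`, i.e. `c·x ∈ F`. So the radical is the image of `F` under
multiplication by `c⁻¹`, and its dimension is `[F:K] = [L:K]/[L:F]` by the tower law.
-/

open Module

/-- The symmetric `K`-bilinear form `φ_{b,σ}(x,y) = Tr_{L/K}(b·(x·σ(y) + σ(x)·y))`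
on `L`, viewed as a bilinear form `L →ₗ[K] L →ₗ[K] K`.  (Note that
`Tr(b·(x·σ(y) + σ(x)·y)) = Tr((b·x)·σ(y)) + Tr((b·σ(x))·y)`.) -/
noncomputable def phi (K L : Type*) [Field K] [Field L] [Algebra K L]
    (b : L) (σ : L ≃ₐ[K] L) : LinearMap.BilinForm K L :=
  (Algebra.traceForm K L).compl₁₂ (LinearMap.mulLeft K b) σ.toLinearMap +
    (Algebra.traceForm K L).compl₁₂ ((LinearMap.mulLeft K b).comp σ.toLinearMap) LinearMap.id

section

variable {K L : Type*} [Field K] [Field L] [Algebra K L]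

theorem IntermediateField.mem_fixedField_zpowers_iff (τ : L ≃ₐ[K] L) (x : L) :
    x ∈ IntermediateField.fixedField (Subgroup.zpowers τ) ↔ τ x = x := by
  refine ⟨fun h => (IntermediateField.mem_fixedField_iff _ x).mp h τ (Subgroup.mem_zpowers τ),
    fun h => (IntermediateField.mem_fixedField_iff _ x).mpr fun g hg => ?_⟩
  exact Subgroup.zpowers_le.mpr (show τ ∈ MulAction.stabilizer (L ≃ₐ[K] L) x from h) hg

theorem Submodule.finrank_comap_mulLeft (p : Submodule K L) {c : L} (hc : c ≠ 0) :
    finrank K (p.comap (LinearMap.mulLeft K c)) = finrank K p := by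
  have hcomap : p.comap (LinearMap.mulLeft K c) =
      p.comap (Units.mulLeftLinearEquiv K L (Units.mk0 c hc) : L →ₗ[K] L) := rfl
  rw [hcomap, Submodule.comap_equiv_eq_map_symm, LinearEquiv.finrank_map_eq]

theorem IntermediateField.finrank_eq_finrank_div [FiniteDimensional K L]
    (F : IntermediateField K L) : finrank K F = finrank K L / finrank F L := by
  rw [← Module.finrank_mul_finrank K F L, Nat.mul_div_cancel _ finrank_pos]

theorem phi_apply (b : L) (σ : L ≃ₐ[K] L) (x y : L) :
    phi K L b σ x y = Algebra.trace K L ((b * x + σ b * σ (σ x)) * σ y) := by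
  simp only [phi, LinearMap.add_apply, LinearMap.compl₁₂_apply, Algebra.traceForm_apply,
    LinearMap.mulLeft_apply, LinearMap.comp_apply, AlgEquiv.toLinearMap_apply, LinearMap.id_apply]
  rw [← Algebra.trace_eq_of_algEquiv σ (b * σ x * y), ← map_add, map_mul, map_mul, add_mul]

theorem mem_ker_phi_iff [FiniteDimensional K L] [Algebra.IsSeparable K L]
    (b : L) (σ : L ≃ₐ[K] L) (x : L) :
    x ∈ LinearMap.ker (phi K L b σ) ↔ b * x + σ b * σ (σ x) = 0 := by
  refine ⟨fun hx => (traceForm_nondegenerate K L).1 _ fun y => ?_, fun hx => ?_⟩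
  · simpa only [phi_apply, AlgEquiv.apply_symm_apply, LinearMap.zero_apply,
      Algebra.traceForm_apply] using
      LinearMap.congr_fun (LinearMap.mem_ker.mp hx) (σ.symm y)
  · ext y
    rw [LinearMap.zero_apply, phi_apply, hx, zero_mul, map_zero]

theorem mul_add_eq_zero_iff_of_neg_mul_inv_eq {b c : L} (hb : b ≠ 0) (hc : c ≠ 0)
    (σ : L ≃ₐ[K] L) (hrel : -(σ b) * b⁻¹ = σ (σ c) * c⁻¹) (x : L) :
    b * x + σ b * σ (σ x) = 0 ↔ σ (σ (c * x)) = c * x := by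
  have hrel' : -(σ b) * c = σ (σ c) * b := by
    field_simp at hrel
    linear_combination hrel
  have key : c * (b * x + σ b * σ (σ x)) = b * (c * x - σ (σ (c * x))) := by
    simp only [map_mul]
    linear_combination (-σ (σ x)) * hrel'
  rw [← mul_eq_zero_iff_left hc, key, mul_eq_zero_iff_left hb, sub_eq_zero, eq_comm]

theorem ker_phi_eq_comap_mulLeft [FiniteDimensional K L] [Algebra.IsSeparable K L]
    {b c : L} (hb : b ≠ 0) (hc : c ≠ 0) (σ : L ≃ₐ[K] L)
    (hrel : -(σ b) * b⁻¹ = σ (σ c) * c⁻¹) :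
    LinearMap.ker (phi K L b σ) =
      (Subalgebra.toSubmodule
        (IntermediateField.fixedField (Subgroup.zpowers (σ ^ 2))).toSubalgebra).comap
          (LinearMap.mulLeft K c) := by
  ext x
  rw [Submodule.mem_comap, mem_ker_phi_iff,
    mul_add_eq_zero_iff_of_neg_mul_inv_eq hb hc σ hrel, LinearMap.mulLeft_apply,
    Subalgebra.mem_toSubmodule, IntermediateField.mem_toSubalgebra,
    IntermediateField.mem_fixedField_zpowers_iff, pow_two, AlgEquiv.mul_apply]

end

theorem radical_eq_of_degenerate_general (K L : Type*) [Field K] [Field L] [Algebra K L]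
    [FiniteDimensional K L] [IsGalois K L]
    (b : L) (hb : b ≠ 0) (σ : L ≃ₐ[K] L) (c : L) (hc : c ≠ 0)
    (hrel : -(σ b) * b⁻¹ = σ (σ c) * c⁻¹)
    (F : IntermediateField K L)
    (hF : F = IntermediateField.fixedField (Subgroup.zpowers (σ ^ 2))) :
    (LinearMap.ker (phi K L b σ) : Set L) = Set.range (fun f : F => c⁻¹ * (f : L)) ∧
    finrank K (LinearMap.ker (phi K L b σ)) = finrank K L / finrank F L ∧
    finrank K L - finrank K (LinearMap.ker (phi K L b σ)) =
      finrank K L - finrank K L / finrank F L := by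
  have hker : LinearMap.ker (phi K L b σ) =
      (Subalgebra.toSubmodule F.toSubalgebra).comap (LinearMap.mulLeft K c) :=
    hF ▸ ker_phi_eq_comap_mulLeft hb hc σ hrel
  have hdim : finrank K (LinearMap.ker (phi K L b σ)) = finrank K L / finrank F L := by
    rw [hker, Submodule.finrank_comap_mulLeft _ hc, Subalgebra.finrank_toSubmodule]
    exact F.finrank_eq_finrank_div
  refine ⟨?_, hdim, by rw [hdim]⟩
  ext x
  rw [SetLike.mem_coe, hker, Submodule.mem_comap, LinearMap.mulLeft_apply]
  constructor
  · intro hx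
    exact ⟨⟨c * x, hx⟩, inv_mul_cancel_left₀ hc x⟩
  · rintro ⟨f, rfl⟩
    rw [mul_inv_cancel_left₀ hc]
    exact f.2

/-- Let `b ∈ L` be nonzero and `σ ∈ Gal(L/K)`, and suppose `φ_{b,σ}` is
degenerate, with nonzero `c ∈ L` satisfying `−σ(b)·b⁻¹ = σ²(c)·c⁻¹`.  Then the radical of
`φ_{b,σ}` equals `c⁻¹·F`, where `F` is the fixed field of `σ²`; hence the radical has
`K`-dimension `n/[L:F]` and the rank of `φ_{b,σ}` equals `n − n/[L:F]` (with `n = [L:K]`). -/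
theorem radical_eq_of_degenerate (K L : Type*) [Field K] [Field L] [Algebra K L]
    [FiniteDimensional K L] [IsGalois K L] (h2 : (2 : K) ≠ 0)
    (b : L) (hb : b ≠ 0) (σ : L ≃ₐ[K] L) (c : L) (hc : c ≠ 0)
    (hrel : -(σ b) * b⁻¹ = σ (σ c) * c⁻¹)
    (F : IntermediateField K L)
    (hF : F = IntermediateField.fixedField (Subgroup.zpowers (σ ^ 2))) :
    (LinearMap.ker (phi K L b σ) : Set L) = Set.range (fun f : F => c⁻¹ * (f : L)) ∧
    finrank K (LinearMap.ker (phi K L b σ)) = finrank K L / finrank F L ∧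
    finrank K L - finrank K (LinearMap.ker (phi K L b σ)) =
      finrank K L - finrank K L / finrank F L :=
  radical_eq_of_degenerate_general K L b hb σ c hc hrel F hF
end

section
/- If σ ∈ G has even order 2r, then there exist nonzero elements b, b' ∈ L such that φ_{b,σ} is degenerate and φ_{b',σ} is nondegenerate. -/
/-!
Dedekind independence of the powers of `σ` gives `b ≠ 0` with `σ b = -b`, and then `1` lies in
the radical of `φ_{b,σ}`.

By nondegeneracy of the trace form, `x` lies in the radical of `φ_{b,σ}` iff
`b x + σ(b) σ²(x) = 0`. Applying to a nonzero solution the norm `N` of `L` over the fixed field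
of `σ²`, i.e. the product over the `r` powers of `σ²`, gives `N b = (-1)^r σ(N b)`; so it
suffices to find `b` violating this. If `(-1)^r ≠ 1`, take `b = 1`. Otherwise we need `N b` not
fixed by `σ`. For finite `L` the norm is surjective onto the fixed field of `σ²`, which `σ` does
not fix pointwise since `σ ∉ ⟨σ²⟩`. For infinite `L`, `c ↦ N (α + c)` with `α` a primitive
element and `c ∈ K` is a polynomial whose conjugate by `σ` is a different polynomial.
-/

open Finset Polynomial IntermediateField

@[to_additive]
theorem Finset.prod_range_succ_eq_prod_range_of_eq {M : Type*} [CommMonoid M] {f : ℕ → M}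
    {n : ℕ} (h : f n = f 0) : ∏ k ∈ range n, f (k + 1) = ∏ k ∈ range n, f k := by
  cases n with
  | zero => simp
  | succ m => rw [prod_range_succ, prod_range_succ' f, h]

theorem notMem_zpowers_sq_of_even_orderOf {G : Type*} [Group G] {g : G}
    (h : Even (orderOf g)) : g ∉ Subgroup.zpowers (g ^ 2) := by
  rintro ⟨j, hj⟩
  have hodd : g ^ (2 * j - 1) = 1 := by
    rw [zpow_sub_one, zpow_mul, zpow_ofNat]
    exact mul_inv_eq_one.mpr hj
  obtain ⟨m, hm⟩ := h
  have hdvd : (2 : ℤ) ∣ 2 * j - 1 :=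
    dvd_trans ⟨m, by rw [hm]; push_cast; ring⟩ (orderOf_dvd_iff_zpow_eq_one.mpr hodd)
  omega

section

variable {K L : Type*} [Field K] [Field L] [Algebra K L]

theorem exists_sum_mul_pow_apply_ne_zero (τ : L ≃ₐ[K] L) {c : ℕ → L} {i : ℕ}
    (hi : i < orderOf τ) (hc : c i ≠ 0) :
    ∃ z : L, ∑ k ∈ range (orderOf τ), c k * (τ ^ k) z ≠ 0 := by
  by_contra! h
  have hinj : Function.Injective
      fun k : Fin (orderOf τ) => ((τ ^ (k : ℕ) : L ≃ₐ[K] L) : L →* L) :=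
    fun k l hkl => Fin.ext <| pow_injOn_Iio_orderOf k.2 l.2 <|
      AlgEquiv.ext fun z => DFunLike.congr_fun hkl z
  have hli := (linearIndependent_monoidHom L L).comp _ hinj
  refine hc (Fintype.linearIndependent_iff.mp hli (fun k => c k) ?_ ⟨i, hi⟩)
  funext z
  simpa only [Finset.sum_apply, Pi.smul_apply, Function.comp_apply, smul_eq_mul, Pi.zero_apply,
    MonoidHom.coe_coe, Fin.sum_univ_eq_sum_range (fun k => c k * (τ ^ k) z)] using h z

theorem exists_ne_zero_apply_eq_neg [FiniteDimensional K L] (τ : L ≃ₐ[K] L)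
    (h : Even (orderOf τ)) : ∃ b : L, b ≠ 0 ∧ τ b = -b := by
  obtain ⟨z, hz⟩ := exists_sum_mul_pow_apply_ne_zero τ (c := fun k => (-1) ^ k)
    (orderOf_pos τ) (by simp)
  refine ⟨_, hz, ?_⟩
  set g : ℕ → L := fun k => (-1) ^ k * (τ ^ k) z
  have hg : g (orderOf τ) = g 0 := by
    simp only [g, pow_orderOf_eq_one, h.neg_one_pow, pow_zero, AlgEquiv.one_apply]
  calc τ (∑ k ∈ range (orderOf τ), g k) = -∑ k ∈ range (orderOf τ), g (k + 1) := by
        rw [map_sum, ← sum_neg_distrib]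
        refine sum_congr rfl fun k _ => ?_
        simp only [g, map_mul, map_pow, map_neg, map_one, pow_succ', AlgEquiv.mul_apply]
        ring
    _ = -∑ k ∈ range (orderOf τ), g k := by rw [sum_range_succ_eq_sum_range_of_eq hg]

noncomputable def twistedTraceForm (σ : L ≃ₐ[K] L) (b : L) : LinearMap.BilinForm K L :=
  LinearMap.mk₂ K (fun x y => Algebra.trace K L (b * (x * σ y + σ x * y)))
    (fun _ _ _ => by rw [← map_add]; congr 1; rw [map_add]; ring)
    (fun _ _ _ => by
      rw [← map_smul]; congr 1; simp only [Algebra.smul_def, map_mul, AlgEquiv.commutes]; ring)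
    (fun _ _ _ => by rw [← map_add]; congr 1; rw [map_add]; ring)
    (fun _ _ _ => by
      rw [← map_smul]; congr 1; simp only [Algebra.smul_def, map_mul, AlgEquiv.commutes]; ring)

@[simp]
theorem twistedTraceForm_apply (σ : L ≃ₐ[K] L) (b x y : L) :
    twistedTraceForm σ b x y = Algebra.trace K L (b * (x * σ y + σ x * y)) := rfl

theorem twistedTraceForm_apply_eq_trace_mul (σ : L ≃ₐ[K] L) (b x y : L) :
    twistedTraceForm σ b x y = Algebra.trace K L ((σ.symm (b * x) + b * σ x) * y) := by
  have h : Algebra.trace K L (b * x * σ y) = Algebra.trace K L (σ.symm (b * x) * y) := by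
    conv_rhs => rw [← Algebra.trace_eq_of_algEquiv σ, map_mul, σ.apply_symm_apply]
  rw [twistedTraceForm_apply, add_mul, map_add, ← h, ← map_add]
  ring_nf

theorem forall_twistedTraceForm_eq_zero_iff [FiniteDimensional K L] [Algebra.IsSeparable K L]
    {σ : L ≃ₐ[K] L} {b x : L} :
    (∀ y, twistedTraceForm σ b x y = 0) ↔ b * x + σ b * σ (σ x) = 0 := by
  have h : σ.symm (b * x) + b * σ x = 0 ↔ b * x + σ b * σ (σ x) = 0 := by
    rw [← map_eq_zero_iff σ σ.injective, map_add, σ.apply_symm_apply, map_mul]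
  simp_rw [twistedTraceForm_apply_eq_trace_mul, ← h]
  exact ⟨(traceForm_nondegenerate K L).1 _, fun h y => by rw [h, zero_mul, map_zero]⟩

noncomputable def orbitProd (τ : L ≃ₐ[K] L) (n : ℕ) (b : L) : L := ∏ k ∈ range n, (τ ^ k) b

section orbitProd

variable {τ : L ≃ₐ[K] L} {n : ℕ}

theorem orbitProd_mul (a b : L) : orbitProd τ n (a * b) = orbitProd τ n a * orbitProd τ n b := by
  simp only [orbitProd, map_mul, prod_mul_distrib]

theorem orbitProd_neg (b : L) : orbitProd τ n (-b) = (-1) ^ n * orbitProd τ n b := by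
  simp only [orbitProd, map_neg, prod_neg, card_range]

theorem orbitProd_one : orbitProd τ n 1 = 1 := by
  simp only [orbitProd, map_one, prod_const_one]

theorem orbitProd_zero (hn : n ≠ 0) : orbitProd τ n 0 = 0 :=
  prod_eq_zero (mem_range.mpr (Nat.pos_of_ne_zero hn)) (map_zero _)

theorem orbitProd_ne_zero {b : L} (hb : b ≠ 0) : orbitProd τ n b ≠ 0 :=
  prod_ne_zero_iff.mpr fun _ _ => (_root_.map_ne_zero _).mpr hb

theorem orbitProd_apply (h : τ ^ n = 1) (b : L) : orbitProd τ n (τ b) = orbitProd τ n b := by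
  simp only [orbitProd, ← AlgEquiv.mul_apply, ← pow_succ]
  exact prod_range_succ_eq_prod_range_of_eq (f := fun k => (τ ^ k) b) (by simp only [h, pow_zero])

theorem apply_orbitProd_of_commute {σ : L ≃ₐ[K] L} (h : Commute σ τ) (b : L) :
    σ (orbitProd τ n b) = orbitProd τ n (σ b) := by
  simp only [orbitProd, map_prod, ← AlgEquiv.mul_apply, (h.pow_right _).eq]

theorem algebraMap_norm_fixedField_zpowers [FiniteDimensional K L] [IsGalois K L] (b : L) :
    algebraMap (fixedField (Subgroup.zpowers τ)) L
      (Algebra.norm (fixedField (Subgroup.zpowers τ)) b) = orbitProd τ (orderOf τ) b := by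
  rw [Algebra.norm_eq_prod_automorphisms, orbitProd, ← Fin.prod_univ_eq_prod_range]
  exact (Fintype.prod_equiv ((finEquivZPowers (isOfFinOrder_of_finite τ)).trans
    (subgroupEquivAlgEquiv _).toEquiv) _ _ fun k => rfl).symm

end orbitProd

theorem exists_forall_apply_ne_self [FiniteDimensional K L] [Algebra.IsSeparable K L] :
    ∃ α : L, ∀ τ : L ≃ₐ[K] L, τ ≠ 1 → τ α ≠ α := by
  let pb := Field.powerBasisOfFiniteOfSeparable K L
  refine ⟨pb.gen, fun τ hτ hfix => hτ (AlgEquiv.coe_toAlgHom_injective ?_)⟩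
  refine AlgHom.ext_of_adjoin_eq_top pb.adjoin_gen_eq_top ?_
  rintro _ rfl
  exact hfix

variable {σ : L ≃ₐ[K] L} {r : ℕ}

theorem orbitProd_sq_eq_neg_one_pow_mul (h2r : σ ^ (2 * r) = 1) {b x : L} (hx : x ≠ 0)
    (h : b * x + σ b * σ (σ x) = 0) :
    orbitProd (σ ^ 2) r b = (-1) ^ r * σ (orbitProd (σ ^ 2) r b) := by
  have hτ : (σ ^ 2) ^ r = 1 := by rw [← pow_mul, h2r]
  have key := congrArg (orbitProd (σ ^ 2) r) (eq_neg_of_add_eq_zero_left h)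
  rw [orbitProd_mul, orbitProd_neg, orbitProd_mul, ← AlgEquiv.mul_apply, ← pow_two,
    orbitProd_apply hτ, ← apply_orbitProd_of_commute (Commute.self_pow σ 2)] at key
  exact mul_right_cancel₀ (orbitProd_ne_zero hx) (key.trans (by ring))

theorem twistedTraceForm_separatingLeft [FiniteDimensional K L] [Algebra.IsSeparable K L]
    (h2r : σ ^ (2 * r) = 1) {b : L}
    (hb : orbitProd (σ ^ 2) r b ≠ (-1) ^ r * σ (orbitProd (σ ^ 2) r b)) :
    (twistedTraceForm σ b).SeparatingLeft := fun x hx => by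
  by_contra hx0
  exact hb (orbitProd_sq_eq_neg_one_pow_mul h2r hx0 (forall_twistedTraceForm_eq_zero_iff.mp hx))

theorem exists_apply_orbitProd_sq_ne_of_finite [FiniteDimensional K L] [IsGalois K L] [Finite L]
    (hord : orderOf σ = 2 * r) : ∃ b : L, σ (orbitProd (σ ^ 2) r b) ≠ orbitProd (σ ^ 2) r b := by
  by_contra! H
  have hr : orderOf (σ ^ 2) = r := by
    rw [orderOf_pow_of_dvd two_ne_zero (hord ▸ dvd_mul_right 2 r), hord]
    omega
  refine notMem_zpowers_sq_of_even_orderOf (hord ▸ even_two_mul r) ?_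
  rw [← fixingSubgroup_fixedField (Subgroup.zpowers (σ ^ 2)),
    IntermediateField.mem_fixingSubgroup_iff]
  intro m hm
  obtain ⟨b, hb⟩ := FiniteField.norm_surjective (fixedField (Subgroup.zpowers (σ ^ 2))) L ⟨m, hm⟩
  have hmb : m = orbitProd (σ ^ 2) r b := by
    rw [← hr, ← algebraMap_norm_fixedField_zpowers, hb]
    rfl
  rw [hmb, H]

theorem exists_apply_orbitProd_sq_ne_of_infinite [FiniteDimensional K L]
    [Algebra.IsSeparable K L] [Infinite L] (hord : orderOf σ = 2 * r) :
    ∃ b : L, σ (orbitProd (σ ^ 2) r b) ≠ orbitProd (σ ^ 2) r b := by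
  have hr : 0 < r := by have := orderOf_pos σ; omega
  have : Infinite K := by
    by_contra hK
    rw [not_infinite_iff_finite] at hK
    have := Module.finite_of_finite K (M := L)
    exact not_finite L
  obtain ⟨α, hα⟩ := exists_forall_apply_ne_self (K := K) (L := L)
  by_contra! H
  set f : L[X] := ∏ k ∈ range r, (C (((σ ^ 2) ^ k) α) + X) -
    ∏ k ∈ range r, (C (σ (((σ ^ 2) ^ k) α)) + X) with hf
  have hf0 : f = 0 := by
    refine eq_zero_of_infinite_isRoot f
      ((Set.infinite_range_of_injective (algebraMap K L).injective).mono ?_)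
    rintro _ ⟨c, rfl⟩
    have hc := H (α + algebraMap K L c)
    simp only [orbitProd, map_prod, map_add, AlgEquiv.commutes] at hc
    simp only [hf, IsRoot, eval_sub, eval_prod, eval_add, eval_C, eval_X, sub_eq_zero]
    exact hc.symm
  -- At `-α` the first product vanishes (factor `k = 0`) but the second does not.
  have hfα := congrArg (eval (-α)) hf0
  simp only [hf, eval_sub, eval_prod, eval_add, eval_C, eval_X, eval_zero] at hfα
  rw [prod_eq_zero (mem_range.mpr hr) (by simp), zero_sub, neg_eq_zero, prod_eq_zero_iff] at hfα
  obtain ⟨k, hk, hk0⟩ := hfα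
  refine hα (σ ^ (2 * k + 1)) (pow_ne_one_of_lt_orderOf (by omega) ?_) ?_
  · rw [hord]
    have := mem_range.mp hk
    omega
  · rw [pow_succ', pow_mul, AlgEquiv.mul_apply]
    exact add_neg_eq_zero.mp hk0

theorem exists_orbitProd_sq_ne_neg_one_pow_mul [FiniteDimensional K L] [IsGalois K L]
    (hord : orderOf σ = 2 * r) :
    ∃ b : L, b ≠ 0 ∧ orbitProd (σ ^ 2) r b ≠ (-1) ^ r * σ (orbitProd (σ ^ 2) r b) := by
  have hr : r ≠ 0 := by have := orderOf_pos σ; omega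
  suffices ∃ b : L, orbitProd (σ ^ 2) r b ≠ (-1) ^ r * σ (orbitProd (σ ^ 2) r b) by
    obtain ⟨b, hb⟩ := this
    exact ⟨b, by rintro rfl; simp [orbitProd_zero hr] at hb, hb⟩
  by_cases hneg : (-1 : L) ^ r = 1
  · obtain ⟨b, hb⟩ : ∃ b : L, σ (orbitProd (σ ^ 2) r b) ≠ orbitProd (σ ^ 2) r b := by
      cases finite_or_infinite L
      · exact exists_apply_orbitProd_sq_ne_of_finite hord
      · exact exists_apply_orbitProd_sq_ne_of_infinite hord
    exact ⟨b, by rw [hneg, one_mul]; exact hb.symm⟩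
  · exact ⟨1, by rw [orbitProd_one, map_one, mul_one]; exact Ne.symm hneg⟩

end

theorem exists_degenerate_and_nondegenerate_of_even_order_general (K L : Type*) [Field K] [Field L]
    [Algebra K L] [FiniteDimensional K L] [IsGalois K L]
    (σ : L ≃ₐ[K] L) (r : ℕ) (hord : orderOf σ = 2 * r) :
    (∃ b : L, b ≠ 0 ∧
        ∃ x : L, x ≠ 0 ∧ ∀ y : L, Algebra.trace K L (b * (x * σ y + σ x * y)) = 0) ∧
    (∃ b' : L, b' ≠ 0 ∧
        ∀ x : L, (∀ y : L, Algebra.trace K L (b' * (x * σ y + σ x * y)) = 0) → x = 0) := by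
  obtain ⟨b, hb, hσb⟩ := exists_ne_zero_apply_eq_neg σ (hord ▸ even_two_mul r)
  obtain ⟨b', hb', hb'σ⟩ := exists_orbitProd_sq_ne_neg_one_pow_mul hord
  have h2r : σ ^ (2 * r) = 1 := hord ▸ pow_orderOf_eq_one σ
  refine ⟨⟨b, hb, 1, one_ne_zero, forall_twistedTraceForm_eq_zero_iff.mpr ?_⟩,
    ⟨b', hb', twistedTraceForm_separatingLeft h2r hb'σ⟩⟩
  rw [hσb, map_one, map_one]
  ring

/-- If `σ ∈ Gal(L/K)` has even order `2r`, then there exist nonzero elements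
`b, b' ∈ L` such that `φ_{b,σ}` is degenerate and `φ_{b',σ}` is nondegenerate, where
`φ_{b,σ}(x,y) = Tr_{L/K}(b·(x·σ(y) + σ(x)·y))`. -/
theorem exists_degenerate_and_nondegenerate_of_even_order (K L : Type*) [Field K] [Field L]
    [Algebra K L] [FiniteDimensional K L] [IsGalois K L] (h2 : (2 : K) ≠ 0)
    (σ : L ≃ₐ[K] L) (r : ℕ) (hr : 1 ≤ r) (hord : orderOf σ = 2 * r) :
    (∃ b : L, b ≠ 0 ∧
        ∃ x : L, x ≠ 0 ∧ ∀ y : L, Algebra.trace K L (b * (x * σ y + σ x * y)) = 0) ∧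
    (∃ b' : L, b' ≠ 0 ∧
        ∀ x : L, (∀ y : L, Algebra.trace K L (b' * (x * σ y + σ x * y)) = 0) → x = 0) :=
  exists_degenerate_and_nondegenerate_of_even_order_general K L σ r hord
end

section
/- Suppose σ ∈ G has order 2. Then for b ∈ L the form φ_{b,σ} is zero if and only if σ(b) = −b, and whenever φ_{b,σ} is nonzero it is nondegenerate. -/
/-!
For an involution `σ`, the `σ`-invariance of the trace moves `σ` from `y` onto `b` and `x`, so
`Tr(b(xσy + σx·y)) = Tr((σb + b)·σx·y)`: the form is the trace form with its left argument
multiplied by `σb + b` and twisted by `σ`. Nondegeneracy of the trace form of a separable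
extension then shows that it vanishes exactly when `σb + b = 0`, and otherwise has zero radical.
-/

open Algebra

theorem AlgEquiv.involutive_of_orderOf_eq_two {K L : Type*} [CommSemiring K] [Semiring L]
    [Algebra K L] {σ : L ≃ₐ[K] L} (hσ : orderOf σ = 2) : Function.Involutive σ := fun y => by
  simpa [hσ, pow_two] using DFunLike.congr_fun (pow_orderOf_eq_one σ) y

theorem Algebra.trace_mul_add_apply_mul_eq {A B : Type*} [CommRing A] [CommRing B] [Algebra A B]
    {σ : B ≃ₐ[A] B} (hσ : Function.Involutive σ) (b x y : B) :
    trace A B (b * (x * σ y + σ x * y)) = trace A B ((σ b + b) * σ x * y) := by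
  have hmove : trace A B (b * (x * σ y)) = trace A B (σ b * σ x * y) := by
    rw [← trace_eq_of_algEquiv σ, map_mul σ, map_mul σ, hσ y, mul_assoc]
  rw [mul_add, map_add, hmove, ← map_add]
  congr 1
  ring

theorem Algebra.eq_zero_of_forall_trace_mul_eq_zero {K L : Type*} [Field K] [Field L]
    [Algebra K L] [FiniteDimensional K L] [Algebra.IsSeparable K L] {z : L}
    (hz : ∀ y, trace K L (z * y) = 0) : z = 0 :=
  (traceForm_nondegenerate K L).1 z fun y => by rw [traceForm_apply, hz]

theorem order_two_zero_or_nondegenerate_general (K L : Type*) [Field K] [Field L] [Algebra K L]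
    [FiniteDimensional K L] [IsGalois K L]
    (σ : L ≃ₐ[K] L) (hord : orderOf σ = 2) (b : L) :
    ((∀ x y : L, Algebra.trace K L (b * (x * σ y + σ x * y)) = 0) ↔ σ b = -b) ∧
    ((¬ ∀ x y : L, Algebra.trace K L (b * (x * σ y + σ x * y)) = 0) →
      ∀ x : L, (∀ y : L, Algebra.trace K L (b * (x * σ y + σ x * y)) = 0) → x = 0) := by
  simp only [trace_mul_add_apply_mul_eq (AlgEquiv.involutive_of_orderOf_eq_two hord) b]
  have hzero : (∀ x y, trace K L ((σ b + b) * σ x * y) = 0) ↔ σ b + b = 0 :=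
    ⟨fun h => by simpa using eq_zero_of_forall_trace_mul_eq_zero (h 1),
      fun h x y => by rw [h, zero_mul, zero_mul, map_zero]⟩
  rw [hzero, ← add_eq_zero_iff_eq_neg]
  refine ⟨Iff.rfl, fun hb x hx => ?_⟩
  have hσx : σ x = 0 := (mul_eq_zero.mp (eq_zero_of_forall_trace_mul_eq_zero hx)).resolve_left hb
  exact (map_eq_zero_iff σ σ.injective).mp hσx

/-- Suppose `σ ∈ Gal(L/K)` has order `2`.  Then for `b ∈ L` the form
`φ_{b,σ}(x,y) = Tr_{L/K}(b·(x·σ(y) + σ(x)·y))` is zero if and only if `σ(b) = −b`, and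
whenever `φ_{b,σ}` is nonzero it is nondegenerate. -/
theorem order_two_zero_or_nondegenerate (K L : Type*) [Field K] [Field L] [Algebra K L]
    [FiniteDimensional K L] [IsGalois K L] (h2 : (2 : K) ≠ 0)
    (σ : L ≃ₐ[K] L) (hord : orderOf σ = 2) (b : L) :
    ((∀ x y : L, Algebra.trace K L (b * (x * σ y + σ x * y)) = 0) ↔ σ b = -b) ∧
    ((¬ ∀ x y : L, Algebra.trace K L (b * (x * σ y + σ x * y)) = 0) →
      ∀ x : L, (∀ y : L, Algebra.trace K L (b * (x * σ y + σ x * y)) = 0) → x = 0) :=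
  order_two_zero_or_nondegenerate_general K L σ hord b
end

section
/- Suppose L/K is a cyclic Galois extension of even degree n = 2r with Gal(L/K) = ⟨σ⟩, and let L₂ denote the fixed field of σ². For nonzero b ∈ L, the form φ_{b,σ} is degenerate if and only if (−1)^r · N_{L/L₂}(σ(b)/b) = 1, and this holds if and only if (−1)^r · N_{L/L₂}(b) = σ(N_{L/L₂}(b)), i.e. N_{L/L₂}(b) = b·σ²(b)⋯σ^{n−2}(b) is an eigenvector of σ for the eigenvalue (−1)^r. -/
/-!
The trace form is invariant under `σ`, so `Tr(b·x·σ y) = Tr(σ⁻¹(b x)·y)`, and by nondegeneracy of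
the trace form `x` lies in the radical of `φ_{b,σ}` iff `σ⁻¹(b x) + b·σ x = 0`, i.e. iff `x` is an
eigenvector of `σ²` with eigenvalue `c = -b/σ(b)`. By Hilbert 90 for the cyclic group
`⟨σ²⟩ = Gal(L/L₂)` such an `x ≠ 0` exists iff `N_{L/L₂}(c) = 1`. Since `σ` commutes with `σ²` it
commutes with `N_{L/L₂}`, so `N_{L/L₂}(c) = (-1)^r N(b)/σ(N(b))`.
-/

open Module Finset

theorem neg_one_pow_mul_div_eq_one_iff {F : Type*} [Field F] {u v : F} (hu : u ≠ 0) (r : ℕ) :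
    (-1) ^ r * (v / u) = 1 ↔ (-1) ^ r * u = v := by
  have hε : (-1 : F) ^ r * (-1) ^ r = 1 := by rw [← mul_pow]; norm_num
  rw [← mul_div_assoc, div_eq_one_iff_eq hu]
  constructor <;> intro h
  · linear_combination -(-1) ^ r * h + v * hε
  · linear_combination -(-1) ^ r * h + u * hε

namespace Algebra

theorem forall_trace_mul_eq_zero_iff_s10 {K L : Type*} [Field K] [Field L] [Algebra K L]
    [FiniteDimensional K L] [Algebra.IsSeparable K L] (w : L) :
    (∀ y, trace K L (w * y) = 0) ↔ w = 0 :=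
  ⟨(traceForm_nondegenerate K L).1 w, by rintro rfl; simp⟩

end Algebra

namespace AlgEquiv

variable {K L : Type*} [Field K] [Field L] [Algebra K L] (τ : L ≃ₐ[K] L)

theorem pow_apply_eq_prod_mul_of_apply_eq_mul {c x : L} (h : τ x = c * x) (n : ℕ) :
    (τ ^ n) x = (∏ j ∈ range n, (τ ^ j) c) * x := by
  induction n with
  | zero => simp
  | succ n ih => rw [pow_succ, mul_apply, h, map_mul, ih, prod_range_succ]; ring

theorem prod_pow_apply_eq_one_of_apply_eq_mul {r : ℕ} (hr : τ ^ r = 1) {c x : L} (hx : x ≠ 0)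
    (h : τ x = c * x) : ∏ j ∈ range r, (τ ^ j) c = 1 := by
  have := pow_apply_eq_prod_mul_of_apply_eq_mul τ h r
  rw [hr, one_apply] at this
  exact (mul_eq_right₀ hx).1 this.symm

theorem linearIndependent_pow_apply :
    LinearIndependent L (fun i : Fin (orderOf τ) ↦ ⇑(τ ^ (i : ℕ))) :=
  (linearIndependent_monoidHom L L).comp
    (fun i : Fin (orderOf τ) ↦ ((τ ^ (i : ℕ) : L ≃ₐ[K] L) : L →* L)) fun i j hij ↦ Fin.ext <| pow_injOn_Iio_orderOf i.2 j.2 <| AlgEquiv.ext fun x ↦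
      DFunLike.congr_fun hij x

theorem exists_apply_eq_mul_of_prod_pow_apply_eq_one (hτ : 0 < orderOf τ) {c : L}
    (hc : ∏ j ∈ range (orderOf τ), (τ ^ j) c = 1) : ∃ x ≠ 0, τ x = c * x := by
  set n := orderOf τ
  set p : ℕ → L := fun j ↦ ∏ k ∈ range j, (τ ^ k) c
  have hp_succ (j : ℕ) : p (j + 1) = c * τ (p j) := by
    simp only [p, prod_range_succ', map_prod, pow_succ', mul_apply, pow_zero, one_apply]
    ring
  -- Dedekind independence of `1, τ, …, τ^(n-1)` gives a nonzero Lagrange resolvent `y`.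
  obtain ⟨z, hy⟩ : ∃ z, ∑ j ∈ range n, p j * (τ ^ j) z ≠ 0 := by
    by_contra! h
    have := Fintype.linearIndependent_iff.1 (linearIndependent_pow_apply τ) (fun i ↦ p i)
      (funext fun z ↦ by
        simp only [Finset.sum_apply, Pi.smul_apply, smul_eq_mul, Pi.zero_apply]
        rw [Fin.sum_univ_eq_sum_range (fun j ↦ p j * (τ ^ j) z)]
        exact h z)
      ⟨0, hτ⟩
    simp [p] at this
  set y := ∑ j ∈ range n, p j * (τ ^ j) z
  have hcy : c * τ y = y := by
    have hshift := sum_range_succ' (fun j ↦ p j * (τ ^ j) z) n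
    rw [sum_range_succ, show p n = 1 from hc, pow_orderOf_eq_one] at hshift
    simp only [p, prod_range_zero, pow_zero, one_apply, one_mul, add_left_inj] at hshift
    calc c * τ y = ∑ j ∈ range n, p (j + 1) * (τ ^ (j + 1)) z := by
          simp only [y, map_sum, mul_sum, map_mul, hp_succ, pow_succ', mul_apply]
          ring_nf
      _ = y := hshift.symm
  refine ⟨y⁻¹, inv_ne_zero hy, ?_⟩
  have hτy : τ y ≠ 0 := by simpa using hy
  rw [map_inv₀]
  field_simp
  linear_combination -hcy

/-- Hilbert's Theorem 90 for the cyclic group generated by `τ`. -/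
theorem exists_apply_eq_mul_iff_prod_pow_apply_eq_one (hτ : 0 < orderOf τ) (c : L) :
    (∃ x ≠ 0, τ x = c * x) ↔ ∏ j ∈ range (orderOf τ), (τ ^ j) c = 1 :=
  ⟨fun ⟨_, hx, h⟩ ↦ prod_pow_apply_eq_one_of_apply_eq_mul τ (pow_orderOf_eq_one τ) hx h,
    exists_apply_eq_mul_of_prod_pow_apply_eq_one τ hτ⟩

open IntermediateField in
theorem algebraMap_norm_fixedField_zpowers [FiniteDimensional K L] [IsGalois K L] (a : L) :
    algebraMap (fixedField (Subgroup.zpowers τ)) L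
        (Algebra.norm (fixedField (Subgroup.zpowers τ)) a) =
      ∏ i ∈ range (orderOf τ), (τ ^ i) a := by
  rw [Algebra.norm_eq_prod_automorphisms, ← Fin.prod_univ_eq_prod_range (fun i ↦ (τ ^ i) a)]
  let e : Fin (orderOf τ) ≃ Gal(L/fixedField (Subgroup.zpowers τ)) :=
    (finEquivZPowers (isOfFinOrder_of_finite τ)).trans
      ((MulEquiv.subgroupCongr (fixingSubgroup_fixedField _).symm).trans
        (fixingSubgroupEquiv _)).toEquiv
  exact (Fintype.prod_equiv e _ _ fun i ↦ rfl).symm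

theorem trace_mul_apply_eq_trace_symm_mul (σ : L ≃ₐ[K] L) (a y : L) :
    Algebra.trace K L (a * σ y) = Algebra.trace K L (σ.symm a * y) := by
  rw [← Algebra.trace_eq_of_algEquiv σ (σ.symm a * y), map_mul σ, apply_symm_apply]

theorem forall_trace_mul_add_eq_zero_iff [FiniteDimensional K L] [Algebra.IsSeparable K L]
    (σ : L ≃ₐ[K] L) {b : L} (hb : b ≠ 0) (x : L) :
    (∀ y, Algebra.trace K L (b * (x * σ y + σ x * y)) = 0) ↔ (σ ^ 2) x = -(b / σ b) * x := by
  have hσb : σ b ≠ 0 := by simpa using hb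
  calc (∀ y, Algebra.trace K L (b * (x * σ y + σ x * y)) = 0)
      ↔ ∀ y, Algebra.trace K L ((σ.symm (b * x) + b * σ x) * y) = 0 := by
        simp only [mul_add, ← mul_assoc, map_add, trace_mul_apply_eq_trace_symm_mul σ (b * x), add_mul]
    _ ↔ σ.symm (b * x) + b * σ x = 0 := Algebra.forall_trace_mul_eq_zero_iff_s10 _
    _ ↔ b * x + σ b * (σ ^ 2) x = 0 := by
        rw [← map_eq_zero_iff σ σ.injective, map_add, apply_symm_apply, map_mul, sq, mul_apply]
    _ ↔ (σ ^ 2) x = -(b / σ b) * x := by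
        constructor <;> intro h <;> field_simp at * <;> linear_combination h

theorem orderOf_sq_eq_of_forall_mem_zpowers [FiniteDimensional K L] [IsGalois K L]
    {σ : L ≃ₐ[K] L} (hgen : ∀ τ : L ≃ₐ[K] L, τ ∈ Subgroup.zpowers σ) {r : ℕ}
    (hn : finrank K L = 2 * r) : orderOf (σ ^ 2) = r := by
  rw [orderOf_pow, orderOf_eq_card_of_forall_mem_zpowers hgen, IsGalois.card_aut_eq_finrank, hn,
    Nat.gcd_eq_right (dvd_mul_right 2 r), Nat.mul_div_cancel_left r two_pos]

end AlgEquiv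

theorem degenerate_iff_cyclic_even_general (K L : Type*) [Field K] [Field L] [Algebra K L]
    [FiniteDimensional K L] [IsGalois K L]
    (σ : L ≃ₐ[K] L) (hgen : ∀ τ : L ≃ₐ[K] L, τ ∈ Subgroup.zpowers σ)
    (r : ℕ) (hn : finrank K L = 2 * r)
    (L₂ : IntermediateField K L)
    (hL₂ : L₂ = IntermediateField.fixedField (Subgroup.zpowers (σ ^ 2)))
    (b : L) (hb : b ≠ 0) :
    ((∃ x : L, x ≠ 0 ∧ ∀ y : L, Algebra.trace K L (b * (x * σ y + σ x * y)) = 0) ↔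
      (-1 : L) ^ r * algebraMap L₂ L (Algebra.norm L₂ (σ b / b)) = 1) ∧
    ((∃ x : L, x ≠ 0 ∧ ∀ y : L, Algebra.trace K L (b * (x * σ y + σ x * y)) = 0) ↔
      (-1 : L) ^ r * algebraMap L₂ L (Algebra.norm L₂ b) =
        σ (algebraMap L₂ L (Algebra.norm L₂ b))) ∧
    algebraMap L₂ L (Algebra.norm L₂ b) = ∏ i ∈ Finset.range r, (σ ^ (2 * i)) b := by
  have hσ2 := AlgEquiv.orderOf_sq_eq_of_forall_mem_zpowers hgen hn
  have hnorm (a : L) : algebraMap L₂ L (Algebra.norm L₂ a) = ∏ i ∈ range r, (σ ^ (2 * i)) a := by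
    subst hL₂
    simp only [pow_mul]
    rw [← hσ2]
    exact AlgEquiv.algebraMap_norm_fixedField_zpowers _ a
  set N := ∏ i ∈ range r, (σ ^ (2 * i)) b
  have hσN : ∏ i ∈ range r, (σ ^ (2 * i)) (σ b) = σ N := by
    simp only [N, map_prod, ← AlgEquiv.mul_apply, ← pow_succ, ← pow_succ']
  have hN : N ≠ 0 := prod_ne_zero_iff.2 fun i _ ↦ (map_ne_zero _).2 hb
  have hdeg : (∃ x : L, x ≠ 0 ∧ ∀ y : L, Algebra.trace K L (b * (x * σ y + σ x * y)) = 0) ↔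
      (-1 : L) ^ r * N = σ N :=
    calc _ ↔ ∃ x ≠ 0, (σ ^ 2) x = -(b / σ b) * x := by
          simp only [AlgEquiv.forall_trace_mul_add_eq_zero_iff σ hb]
      _ ↔ ∏ j ∈ range r, ((σ ^ 2) ^ j) (-(b / σ b)) = 1 :=
          hσ2 ▸ AlgEquiv.exists_apply_eq_mul_iff_prod_pow_apply_eq_one _ (orderOf_pos _) _
      _ ↔ (-1) ^ r * N / σ N = 1 := by
          simp only [← pow_mul, map_neg, map_div₀, prod_neg, prod_div_distrib, card_range, hσN,
            mul_div_assoc, N]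
      _ ↔ _ := div_eq_one_iff_eq ((map_ne_zero σ).2 hN)
  refine ⟨?_, by rw [hdeg, hnorm], hnorm b⟩
  rw [hdeg, hnorm]
  simp only [map_div₀, prod_div_distrib, hσN]
  exact (neg_one_pow_mul_div_eq_one_iff hN r).symm

/-- Let `L/K` be a cyclic Galois extension of even degree `n = 2r` with
`Gal(L/K) = ⟨σ⟩`, and let `L₂` be the fixed field of `σ²`.  For nonzero `b ∈ L`, the form
`φ_{b,σ}(x,y) = Tr_{L/K}(b·(x·σ(y) + σ(x)·y))` is degenerate if and only if
`(−1)^r · N_{L/L₂}(σ(b)/b) = 1`, and this holds if and only if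
`(−1)^r · N_{L/L₂}(b) = σ(N_{L/L₂}(b))`, i.e. `N_{L/L₂}(b) = b·σ²(b)⋯σ^{n−2}(b)` is an
eigenvector of `σ` for the eigenvalue `(−1)^r`. -/
theorem degenerate_iff_cyclic_even (K L : Type*) [Field K] [Field L] [Algebra K L]
    [FiniteDimensional K L] [IsGalois K L] (h2 : (2 : K) ≠ 0)
    (σ : L ≃ₐ[K] L) (hgen : ∀ τ : L ≃ₐ[K] L, τ ∈ Subgroup.zpowers σ)
    (r : ℕ) (hr : 1 ≤ r) (hn : finrank K L = 2 * r)
    (L₂ : IntermediateField K L)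
    (hL₂ : L₂ = IntermediateField.fixedField (Subgroup.zpowers (σ ^ 2)))
    (b : L) (hb : b ≠ 0) :
    ((∃ x : L, x ≠ 0 ∧ ∀ y : L, Algebra.trace K L (b * (x * σ y + σ x * y)) = 0) ↔
      (-1 : L) ^ r * algebraMap L₂ L (Algebra.norm L₂ (σ b / b)) = 1) ∧
    ((∃ x : L, x ≠ 0 ∧ ∀ y : L, Algebra.trace K L (b * (x * σ y + σ x * y)) = 0) ↔
      (-1 : L) ^ r * algebraMap L₂ L (Algebra.norm L₂ b) =
        σ (algebraMap L₂ L (Algebra.norm L₂ b))) ∧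
    algebraMap L₂ L (Algebra.norm L₂ b) = ∏ i ∈ Finset.range r, (σ ^ (2 * i)) b :=
  degenerate_iff_cyclic_even_general K L σ hgen r hn L₂ hL₂ b hb
end

section
/- Let n = 2^α·k with α ≥ 2 and k odd, and let L/K be a cyclic Galois extension of degree n with Gal(L/K) = ⟨σ⟩. Then for each 1 ≤ i ≤ α − 1, the K-subspace E_i := {b ∈ L : σ^{n/2^i}(b) = −b} of L has K-dimension n/2^i. -/
open Module IntermediateField Subgroup

/-!
By Dedekind's independence of characters the minimal polynomial of `τ = σ ^ (n / 2 ^ i)`, viewed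
as a `K`-linear map, is `X ^ 2 ^ i - 1`, so `-1` is an eigenvalue: there is `b ≠ 0` with
`τ b = -b`. Every other such vector is `b` times an element of the fixed field `F` of `⟨τ⟩`,
so the eigenspace is `F • b`, of `K`-dimension `[F : K] = n / 2 ^ i`.
-/

namespace AlgEquiv

variable {K L : Type*} [Field K] [Field L] [Algebra K L]

theorem exists_ne_zero_apply_eq_neg_of_even_orderOf [FiniteDimensional K L] (τ : L ≃ₐ[K] L)
    (heven : Even (orderOf τ)) : ∃ b : L, b ≠ 0 ∧ τ b = -b := by
  have hμ : Module.End.HasEigenvalue τ.toLinearMap (-1) := by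
    rw [Module.End.hasEigenvalue_iff_isRoot,
      minpoly_algEquiv_toLinearMap τ (isOfFinOrder_of_finite τ)]
    simp [heven.neg_one_pow]
  obtain ⟨b, hb⟩ := hμ.exists_hasEigenvector
  exact ⟨b, hb.2, by simpa using hb.apply_eq_smul⟩

theorem mem_fixedField_zpowers_iff (τ : L ≃ₐ[K] L) (x : L) :
    x ∈ fixedField (zpowers τ) ↔ τ x = x := by
  refine ⟨fun hx => hx ⟨τ, mem_zpowers τ⟩, fun hx g => ?_⟩
  have hstab : zpowers τ ≤ MulAction.stabilizer (L ≃ₐ[K] L) x :=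
    zpowers_le.mpr (MulAction.mem_stabilizer_iff.mpr hx)
  exact hstab g.2

theorem finrank_ker_add_id_eq_finrank_fixedField (τ : L ≃ₐ[K] L) {b : L} (hb0 : b ≠ 0)
    (hb : τ b = -b) :
    finrank K (LinearMap.ker (τ.toLinearMap + LinearMap.id)) =
      finrank K (fixedField (zpowers τ)) := by
  set φ : fixedField (zpowers τ) →ₗ[K] L :=
    (LinearMap.mulRight K b).comp (fixedField (zpowers τ)).val.toLinearMap
  have hφ : Function.Injective φ := fun x y h =>
    Subtype.ext (mul_right_cancel₀ hb0 (h : (x : L) * b = y * b))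
  have hrange : LinearMap.range φ = LinearMap.ker (τ.toLinearMap + LinearMap.id) := by
    ext x
    simp only [LinearMap.mem_range, LinearMap.mem_ker, LinearMap.add_apply, LinearMap.id_apply,
      AlgEquiv.toLinearMap_apply, ← eq_neg_iff_add_eq_zero]
    constructor
    · rintro ⟨y, rfl⟩
      change τ (y * b) = -(y * b)
      rw [map_mul, (mem_fixedField_zpowers_iff τ y).mp y.2, hb, mul_neg]
    · intro hx
      have hxb : x * b⁻¹ ∈ fixedField (zpowers τ) := by
        rw [mem_fixedField_zpowers_iff, map_mul, map_inv₀, hx, hb, inv_neg, neg_mul_neg]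
      exact ⟨⟨x * b⁻¹, hxb⟩, inv_mul_cancel_right₀ hb0 x⟩
  rw [← hrange, LinearEquiv.finrank_eq (LinearEquiv.ofInjective φ hφ)]

theorem finrank_fixedField_zpowers [FiniteDimensional K L] (τ : L ≃ₐ[K] L) :
    finrank K (fixedField (zpowers τ)) = finrank K L / orderOf τ := by
  rw [← finrank_mul_finrank K (fixedField (zpowers τ)) L, finrank_fixedField_eq_card,
    Nat.card_zpowers, Nat.mul_div_cancel _ (orderOf_pos τ)]

theorem finrank_ker_add_id_of_even_orderOf [FiniteDimensional K L] (τ : L ≃ₐ[K] L)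
    (heven : Even (orderOf τ)) :
    finrank K (LinearMap.ker (τ.toLinearMap + LinearMap.id)) = finrank K L / orderOf τ := by
  obtain ⟨b, hb0, hb⟩ := exists_ne_zero_apply_eq_neg_of_even_orderOf τ heven
  rw [finrank_ker_add_id_eq_finrank_fixedField τ hb0 hb, finrank_fixedField_zpowers]

end AlgEquiv

theorem dim_eigenspace_neg_one_general (K L : Type*) [Field K] [Field L] [Algebra K L]
    [FiniteDimensional K L] [IsGalois K L]
    (n α k : ℕ) (hnk : n = 2 ^ α * k)
    (hn : finrank K L = n)
    (σ : L ≃ₐ[K] L) (hgen : ∀ τ : L ≃ₐ[K] L, τ ∈ Subgroup.zpowers σ)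
    (i : ℕ) (hi1 : 1 ≤ i) (hi2 : i ≤ α - 1) :
    finrank K (LinearMap.ker ((σ ^ (n / 2 ^ i)).toLinearMap + LinearMap.id)) = n / 2 ^ i := by
  have horder : orderOf σ = n := by
    rw [orderOf_eq_card_of_forall_mem_zpowers hgen, IsGalois.card_aut_eq_finrank, hn]
  have hdvd : 2 ^ i ∣ n := hnk ▸ (pow_dvd_pow 2 (by omega)).mul_right k
  have hτ : orderOf (σ ^ (n / 2 ^ i)) = 2 ^ i := by
    have := orderOf_pow_orderOf_div (x := σ) (by rw [horder, ← hn]; exact finrank_pos.ne')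
      (horder ▸ hdvd)
    rwa [horder] at this
  have heven : Even (orderOf (σ ^ (n / 2 ^ i))) := by
    rw [hτ]
    exact Nat.even_pow.mpr ⟨even_two, by omega⟩
  rw [AlgEquiv.finrank_ker_add_id_of_even_orderOf _ heven, hτ, hn]

/-- Let `n = 2^α·k` with `α ≥ 2` and `k` odd, and let `L/K` be a cyclic
Galois extension of degree `n` with `Gal(L/K) = ⟨σ⟩`.  Then for each `1 ≤ i ≤ α − 1`, the
`K`-subspace `E_i = {b ∈ L : σ^{n/2^i}(b) = −b}` of `L` (the kernel of the `K`-linear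
endomorphism `σ^{n/2^i} + id` of `L`) has `K`-dimension `n/2^i`. -/
theorem dim_eigenspace_neg_one (K L : Type*) [Field K] [Field L] [Algebra K L]
    [FiniteDimensional K L] [IsGalois K L] (h2 : (2 : K) ≠ 0)
    (n α k : ℕ) (hα : 2 ≤ α) (hk : Odd k) (hnk : n = 2 ^ α * k)
    (hn : finrank K L = n)
    (σ : L ≃ₐ[K] L) (hgen : ∀ τ : L ≃ₐ[K] L, τ ∈ Subgroup.zpowers σ)
    (i : ℕ) (hi1 : 1 ≤ i) (hi2 : i ≤ α - 1) :
    finrank K (LinearMap.ker ((σ ^ (n / 2 ^ i)).toLinearMap + LinearMap.id)) = n / 2 ^ i :=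
  dim_eigenspace_neg_one_general K L n α k hnk hn σ hgen i hi1 hi2
end

section
/- Let K be a field and n ≥ 1. If S is a K-subspace of the space M(n,K) of n×n matrices over K all of whose nonzero elements are invertible, then dim_K S ≤ n. Equivalently, every K-subspace of M(n,K) of dimension greater than n contains a nonzero singular matrix. -/
open Module

/-- Evaluation at a fixed nonzero vector is injective on such a subspace. -/
theorem Submodule.finrank_le_card_of_forall_isUnit {K ι : Type*} [Field K] [Fintype ι]
    [DecidableEq ι] (S : Submodule K (Matrix ι ι K)) (hS : ∀ A ∈ S, A ≠ 0 → IsUnit A) :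
    finrank K S ≤ Fintype.card ι := by
  rcases isEmpty_or_nonempty ι with _ | _
  · simp [finrank_zero_of_subsingleton]
  obtain ⟨v, hv⟩ := exists_ne (0 : ι → K)
  let eval : S →ₗ[K] (ι → K) := (Matrix.mulVecBilin K K).flip v ∘ₗ S.subtype
  have eval_injective : Function.Injective eval := by
    refine (injective_iff_map_eq_zero eval).2 fun A hA => ?_
    by_contra hA0
    have hunit : IsUnit (A : Matrix ι ι K) := hS A A.2 (by simpa using hA0)
    exact hv (Matrix.mulVec_injective_iff_isUnit.2 hunit (by simpa [eval] using hA))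
  calc finrank K S ≤ finrank K (ι → K) :=
        LinearMap.finrank_le_finrank_of_injective eval_injective
    _ = Fintype.card ι := finrank_fintype_fun_eq_card K

theorem dim_le_of_all_invertible_general (K : Type*) [Field K] (n : ℕ) :
    (∀ S : Submodule K (Matrix (Fin n) (Fin n) K),
      (∀ A ∈ S, A ≠ 0 → IsUnit A) → finrank K S ≤ n) ∧
    (∀ S : Submodule K (Matrix (Fin n) (Fin n) K),
      n < finrank K S → ∃ A ∈ S, A ≠ 0 ∧ ¬ IsUnit A) := by
  have dim_le (S : Submodule K (Matrix (Fin n) (Fin n) K))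
      (hS : ∀ A ∈ S, A ≠ 0 → IsUnit A) : finrank K S ≤ n := by
    simpa using S.finrank_le_card_of_forall_isUnit hS
  refine ⟨dim_le, fun S hlt => ?_⟩
  by_contra! h
  exact (dim_le S h).not_gt hlt

/-- Let `K` be a field and `n ≥ 1`.  If `S` is a `K`-subspace of the space
`M(n,K)` of `n×n` matrices over `K` all of whose nonzero elements are invertible, then
`dim_K S ≤ n`.  Equivalently, every `K`-subspace of `M(n,K)` of dimension greater than `n`
contains a nonzero singular matrix. -/
theorem dim_le_of_all_invertible (K : Type*) [Field K] (n : ℕ) (hn : 1 ≤ n) :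
    (∀ S : Submodule K (Matrix (Fin n) (Fin n) K),
      (∀ A ∈ S, A ≠ 0 → IsUnit A) → finrank K S ≤ n) ∧
    (∀ S : Submodule K (Matrix (Fin n) (Fin n) K),
      n < finrank K S → ∃ A ∈ S, A ≠ 0 ∧ ¬ IsUnit A) :=
  dim_le_of_all_invertible_general K n
end

section
/- Let K be a field, m ≥ 1, and let U be a K-subspace of M(m,K) all of whose nonzero elements are invertible. Then the set S of 2m×2m block matrices of the form [[0, A],[Aᵀ, 0]] with A ∈ U is a K-subspace of the space S(2m,K) of symmetric 2m×2m matrices, S has the same K-dimension as U, and every nonzero element of S is invertible. In particular μ_{2m}(K) ≥ τ_m(K). -/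
open Module Matrix

/-- `τ_n(K)`: the maximal dimension of a `K`-subspace of `M(n,K)` all of whose nonzero
elements are invertible. -/
noncomputable def tauInv (K : Type*) [Field K] (n : ℕ) : ℕ :=
  sSup {d | ∃ S : Submodule K (Matrix (Fin n) (Fin n) K),
    (∀ A ∈ S, A ≠ 0 → IsUnit A) ∧ finrank K S = d}

/-- `μ_n(K)`: the maximal dimension of a `K`-subspace of `S(n,K)` (symmetric `n×n`
matrices) all of whose nonzero elements are invertible. -/
noncomputable def muInv (K : Type*) [Field K] (n : ℕ) : ℕ :=
  sSup {d | ∃ S : Submodule K (Matrix (Fin n) (Fin n) K),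
    (∀ A ∈ S, A.IsSymm) ∧ (∀ A ∈ S, A ≠ 0 → IsUnit A) ∧ finrank K S = d}

/-! For invertible `A`, the symmetric matrix `[[0, A], [Aᵀ, 0]]` is invertible with inverse
`[[0, (A⁻¹)ᵀ], [A⁻¹, 0]]`. Since `A ↦ [[0, A], [Aᵀ, 0]]` is linear and injective, it carries `U`
to a subspace of symmetric matrices of the same dimension whose nonzero elements are invertible. -/

namespace Matrix

variable {n ι R : Type*}

theorem isSymm_fromBlocks_zero_transpose {m : Type*} [Zero R] (A : Matrix m n R) :
    (fromBlocks 0 A Aᵀ 0).IsSymm :=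
  .fromBlocks isSymm_zero rfl isSymm_zero

theorem isUnit_fromBlocks_zero_transpose [Fintype n] [DecidableEq n] [CommSemiring R]
    {A : Matrix n n R} (hA : IsUnit A) : IsUnit (fromBlocks 0 A Aᵀ 0) := by
  obtain ⟨u, rfl⟩ := hA
  refine .of_mul_eq_one (fromBlocks 0 (↑u⁻¹ : Matrix n n R)ᵀ ↑u⁻¹ 0) ?_
  rw [fromBlocks_multiply, ← transpose_mul]
  simp

section Semiring

variable [Semiring R] (e : n ⊕ n ≃ ι)

variable (R) in
def symmBlockₗ : Matrix n n R →ₗ[R] Matrix ι ι R where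
  toFun A := reindex e e (fromBlocks 0 A Aᵀ 0)
  map_add' A B := by
    simp only [← coe_reindexLinearEquiv R R, ← map_add, fromBlocks_add, transpose_add, add_zero]
  map_smul' c A := by
    simp only [← coe_reindexLinearEquiv R R, ← map_smul, fromBlocks_smul, transpose_smul,
      smul_zero, RingHom.id_apply]

theorem symmBlockₗ_injective : Function.Injective (symmBlockₗ R e) := by
  intro A B h
  simpa using congrArg toBlocks₁₂ ((reindex e e).injective h)

theorem isSymm_of_mem_map_symmBlockₗ {U : Submodule R (Matrix n n R)} {B : Matrix ι ι R}
    (hB : B ∈ U.map (symmBlockₗ R e)) : B.IsSymm := by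
  obtain ⟨A, -, rfl⟩ := hB
  exact (isSymm_fromBlocks_zero_transpose A).submatrix e.symm

theorem finrank_map_symmBlockₗ (U : Submodule R (Matrix n n R)) :
    finrank R (U.map (symmBlockₗ R e)) = finrank R U :=
  (Submodule.equivMapOfInjective _ (symmBlockₗ_injective e) U).finrank_eq.symm

end Semiring

theorem isUnit_of_mem_map_symmBlockₗ [Fintype n] [DecidableEq n] [Fintype ι] [DecidableEq ι]
    [CommSemiring R] (e : n ⊕ n ≃ ι) {U : Submodule R (Matrix n n R)}
    (hU : ∀ A ∈ U, A ≠ 0 → IsUnit A) {B : Matrix ι ι R} (hB : B ∈ U.map (symmBlockₗ R e))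
    (hB0 : B ≠ 0) : IsUnit B := by
  obtain ⟨A, hAU, rfl⟩ := hB
  have hA0 : A ≠ 0 := by rintro rfl; exact hB0 (map_zero _)
  exact (isUnit_fromBlocks_zero_transpose (hU A hAU hA0)).map (reindexAlgEquiv R R e)

end Matrix

theorem tauInv_le_muInv (K : Type*) [Field K] (m : ℕ) : tauInv K m ≤ muInv K (2 * m) := by
  let e : Fin m ⊕ Fin m ≃ Fin (2 * m) := finSumFinEquiv.trans (finCongr (two_mul m).symm)
  apply csSup_le_csSup
  · refine ⟨finrank K (Matrix (Fin (2 * m)) (Fin (2 * m)) K), ?_⟩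
    rintro d ⟨S, -, -, rfl⟩
    exact S.finrank_le
  · exact ⟨0, ⊥, fun A hA hA0 => absurd ((Submodule.mem_bot K).mp hA) hA0, finrank_bot K _⟩
  · rintro d ⟨U, hU, rfl⟩
    exact ⟨U.map (symmBlockₗ K e), fun B => isSymm_of_mem_map_symmBlockₗ e,
      fun B => isUnit_of_mem_map_symmBlockₗ e hU, finrank_map_symmBlockₗ e U⟩

theorem block_construction_general (K : Type*) [Field K] (m : ℕ)
    (U : Submodule K (Matrix (Fin m) (Fin m) K))
    (hU : ∀ A ∈ U, A ≠ 0 → IsUnit A)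
    (e : Fin m ⊕ Fin m ≃ Fin (2 * m))
    (S : Submodule K (Matrix (Fin (2 * m)) (Fin (2 * m)) K))
    (hS : S = Submodule.span K (Set.range fun A : U =>
      Matrix.reindex e e (Matrix.fromBlocks 0 (A : Matrix (Fin m) (Fin m) K)
        (A : Matrix (Fin m) (Fin m) K)ᵀ 0))) :
    (S : Set (Matrix (Fin (2 * m)) (Fin (2 * m)) K)) = Set.range (fun A : U =>
      Matrix.reindex e e (Matrix.fromBlocks 0 (A : Matrix (Fin m) (Fin m) K)
        (A : Matrix (Fin m) (Fin m) K)ᵀ 0)) ∧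
    (∀ B ∈ S, B.IsSymm) ∧
    finrank K S = finrank K U ∧
    (∀ B ∈ S, B ≠ 0 → IsUnit B) ∧
    tauInv K m ≤ muInv K (2 * m) := by
  have hrange : Set.range (fun A : U => reindex e e (fromBlocks 0 (A : Matrix (Fin m) (Fin m) K)
      (A : Matrix (Fin m) (Fin m) K)ᵀ 0)) = U.map (symmBlockₗ K e) := by
    rw [Submodule.map_coe, Set.image_eq_range]
    rfl
  have hS_map : S = U.map (symmBlockₗ K e) := by rw [hS, hrange, Submodule.span_eq]
  subst hS_map
  exact ⟨hrange.symm, fun B => isSymm_of_mem_map_symmBlockₗ e, finrank_map_symmBlockₗ e U,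
    fun B => isUnit_of_mem_map_symmBlockₗ e hU, tauInv_le_muInv K m⟩

/-- Let `K` be a field, `m ≥ 1`, and let `U` be a `K`-subspace of `M(m,K)`
all of whose nonzero elements are invertible.  Then the set `S` of `2m×2m` block matrices
of the form `[[0, A],[Aᵀ, 0]]` with `A ∈ U` is a `K`-subspace of `S(2m,K)`, `S` has the
same `K`-dimension as `U`, and every nonzero element of `S` is invertible.  In particular
`μ_{2m}(K) ≥ τ_m(K)`.  (Block matrices are reindexed from `Fin m ⊕ Fin m` to `Fin (2m)`.) -/
theorem block_construction (K : Type*) [Field K] (m : ℕ) (hm : 1 ≤ m)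
    (U : Submodule K (Matrix (Fin m) (Fin m) K))
    (hU : ∀ A ∈ U, A ≠ 0 → IsUnit A)
    (e : Fin m ⊕ Fin m ≃ Fin (2 * m))
    (he : e = finSumFinEquiv.trans (finCongr (two_mul m).symm))
    (S : Submodule K (Matrix (Fin (2 * m)) (Fin (2 * m)) K))
    (hS : S = Submodule.span K (Set.range fun A : U =>
      Matrix.reindex e e (Matrix.fromBlocks 0 (A : Matrix (Fin m) (Fin m) K)
        (A : Matrix (Fin m) (Fin m) K)ᵀ 0))) :
    (S : Set (Matrix (Fin (2 * m)) (Fin (2 * m)) K)) = Set.range (fun A : U =>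
      Matrix.reindex e e (Matrix.fromBlocks 0 (A : Matrix (Fin m) (Fin m) K)
        (A : Matrix (Fin m) (Fin m) K)ᵀ 0)) ∧
    (∀ B ∈ S, B.IsSymm) ∧
    finrank K S = finrank K U ∧
    (∀ B ∈ S, B ≠ 0 → IsUnit B) ∧
    tauInv K m ≤ muInv K (2 * m) :=
  block_construction_general K m U hU e S hS
end

section
/- Let K be a finite field of odd characteristic and n ≥ 1. Then there exists a K-subspace of the space S(n,K) of symmetric n×n matrices over K of dimension n all of whose nonzero elements are invertible; consequently μ_n(K) = τ_n(K) = n. -/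
open Module

/-!
Let `L/K` be the extension of degree `n` and `e` a `K`-basis of `L`. For `c ∈ L` the Gram
matrix of the symmetric form `(x, y) ↦ Tr(c x y)` in the basis `e` factors as
`(leftMulMatrix e c)ᵀ * traceMatrix K e`, so its determinant is `N(c) · disc(e)`, which is
nonzero for `c ≠ 0` because `L/K` is separable. Hence `c ↦ Tr(c e_i e_j)` embeds `L` into the
symmetric matrices with all nonzero values invertible. Conversely, a subspace of `M(n,K)` whose
nonzero elements are invertible meets the kernel of `A ↦ A v` (for any `v ≠ 0`) trivially,
so it has dimension at most `n`.
-/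

open scoped Matrix

namespace Algebra

variable {K L ι : Type*} [Field K] [Field L] [Algebra K L]

noncomputable def scaledTraceMatrix (e : Basis ι K L) : L →ₗ[K] Matrix ι ι K where
  toFun c := Matrix.of fun i j => trace K L (c * e i * e j)
  map_add' a b := by ext; simp [add_mul]
  map_smul' a b := by ext; simp

theorem scaledTraceMatrix_isSymm (e : Basis ι K L) (c : L) : (scaledTraceMatrix e c).IsSymm :=
  Matrix.IsSymm.ext fun i j => by simp [scaledTraceMatrix, mul_right_comm]

variable [Fintype ι] [DecidableEq ι]

theorem scaledTraceMatrix_eq (e : Basis ι K L) (c : L) :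
    scaledTraceMatrix e c = (leftMulMatrix e c)ᵀ * traceMatrix K e := by
  ext i j
  simp only [scaledTraceMatrix, LinearMap.coe_mk, AddHom.coe_mk, Matrix.of_apply, Matrix.mul_apply,
    Matrix.transpose_apply, leftMulMatrix_eq_repr_mul, traceMatrix_apply, traceForm_apply]
  conv_lhs => rw [← e.sum_repr (c * e i)]
  simp only [Finset.sum_mul, map_sum, smul_mul_assoc, map_smul, smul_eq_mul]

theorem det_scaledTraceMatrix (e : Basis ι K L) (c : L) :
    (scaledTraceMatrix e c).det = norm K c * discr K e := by
  rw [scaledTraceMatrix_eq, Matrix.det_mul, Matrix.det_transpose, norm_eq_matrix_det e,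
    discr_def]

variable [Module.Finite K L] [Algebra.IsSeparable K L]

theorem isUnit_scaledTraceMatrix (e : Basis ι K L) {c : L} (hc : c ≠ 0) :
    IsUnit (scaledTraceMatrix e c) := by
  rw [Matrix.isUnit_iff_isUnit_det, det_scaledTraceMatrix, isUnit_iff_ne_zero]
  exact mul_ne_zero (norm_ne_zero_iff.mpr hc) (discr_not_zero_of_basis K e)

theorem scaledTraceMatrix_injective (e : Basis ι K L) :
    Function.Injective (scaledTraceMatrix e) := by
  have := e.index_nonempty
  refine (injective_iff_map_eq_zero _).mpr fun c hc => ?_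
  by_contra hc0
  exact not_isUnit_zero (hc ▸ isUnit_scaledTraceMatrix e hc0)

theorem exists_symm_submodule_isUnit (e : Basis ι K L) :
    ∃ S : Submodule K (Matrix ι ι K), (∀ A ∈ S, A.IsSymm) ∧ (∀ A ∈ S, A ≠ 0 → IsUnit A) ∧
      finrank K S = Fintype.card ι := by
  refine ⟨LinearMap.range (scaledTraceMatrix e), ?_, ?_, ?_⟩
  · rintro _ ⟨c, rfl⟩
    exact scaledTraceMatrix_isSymm e c
  · rintro _ ⟨c, rfl⟩ hA
    exact isUnit_scaledTraceMatrix e (by rintro rfl; exact hA (map_zero _))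
  · rw [LinearMap.finrank_range_of_inj (scaledTraceMatrix_injective e), finrank_eq_card_basis e]

end Algebra

namespace Matrix

theorem finrank_le_card_of_forall_isUnit {K ι : Type*} [Field K] [Fintype ι] [DecidableEq ι]
    [Nonempty ι] (S : Submodule K (Matrix ι ι K)) (hS : ∀ A ∈ S, A ≠ 0 → IsUnit A) :
    finrank K S ≤ Fintype.card ι := by
  let v : ι → K := fun _ => 1
  let mulVecAt : S →ₗ[K] ι → K :=
    LinearMap.applyₗ v ∘ₗ (toLin' : Matrix ι ι K ≃ₗ[K] _).toLinearMap ∘ₗ S.subtype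
  have : Function.Injective mulVecAt := by
    refine (injective_iff_map_eq_zero _).mpr fun A hA => ?_
    by_contra hA0
    have hdet := (isUnit_iff_isUnit_det _).mp (hS A A.2 (by simpa using hA0))
    have := eq_zero_of_mulVec_eq_zero hdet.ne_zero hA
    exact one_ne_zero (congrFun this (Classical.arbitrary ι))
  simpa using LinearMap.finrank_le_finrank_of_injective this

end Matrix

theorem mu_tau_finite_field_general (K : Type*) [Field K] [Finite K]
    (n : ℕ) (hn : 1 ≤ n) :
    (∃ S : Submodule K (Matrix (Fin n) (Fin n) K),
      (∀ A ∈ S, A.IsSymm) ∧ (∀ A ∈ S, A ≠ 0 → IsUnit A) ∧ finrank K S = n) ∧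
    muInv K n = n ∧ tauInv K n = n := by
  obtain ⟨p, _⟩ := CharP.exists K
  have : Fact p.Prime := ⟨CharP.char_is_prime K p⟩
  have : NeZero n := ⟨by omega⟩
  obtain ⟨S, hsymm, hunit, hrank⟩ := Algebra.exists_symm_submodule_isUnit
    (finBasisOfFinrankEq K _ (FiniteField.finrank_extension K p n))
  rw [Fintype.card_fin] at hrank
  have : Nonempty (Fin n) := ⟨⟨0, hn⟩⟩
  refine ⟨⟨S, hsymm, hunit, hrank⟩, IsGreatest.csSup_eq ⟨⟨S, hsymm, hunit, hrank⟩, ?_⟩,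
    IsGreatest.csSup_eq ⟨⟨S, hunit, hrank⟩, ?_⟩⟩
  · rintro _ ⟨T, -, hT, rfl⟩
    simpa using Matrix.finrank_le_card_of_forall_isUnit T hT
  · rintro _ ⟨T, hT, rfl⟩
    simpa using Matrix.finrank_le_card_of_forall_isUnit T hT

/-- Let `K` be a finite field of odd characteristic and `n ≥ 1`.  Then there
exists a `K`-subspace of `S(n,K)` of dimension `n` all of whose nonzero elements are
invertible; consequently `μ_n(K) = τ_n(K) = n`. -/
theorem mu_tau_finite_field (K : Type*) [Field K] [Finite K]
    (hchar : ringChar K ≠ 2) (n : ℕ) (hn : 1 ≤ n) :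
    (∃ S : Submodule K (Matrix (Fin n) (Fin n) K),
      (∀ A ∈ S, A.IsSymm) ∧ (∀ A ∈ S, A ≠ 0 → IsUnit A) ∧ finrank K S = n) ∧
    muInv K n = n ∧ tauInv K n = n :=
  mu_tau_finite_field_general K n hn
end
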